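/- Let n ≥ 1 and assume the step ratios satisfy 0 < r_k < (3+√17)/2 for 2 ≤ k ≤ n. Let B̃₂ be the n×n real lower bidiagonal matrix whose k-th diagonal entry is (1+2r_k)/(1+r_k) and whose k-th subdiagonal entry (row k, column k−1) is −r_k^{3/2}/(1+r_k), where r_1 := 0. Then the real symmetric matrix B̃ := B̃₂ + B̃₂ᵀ is positive definite. -/

import Mathlib

open Finset Matrix

/-- The `m × m` lower bidiagonal matrix `B̃₂` with `k`-th diagonal entry
`(1+2r_k)/(1+r_k)` and `k`-th subdiagonal entry `−r_k^{3/2}/(1+r_k)`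
(rows/columns `0,…,m−1` correspond to `k = 1,…,m`). -/
noncomputable def Bt2 (r : ℕ → ℝ) (m : ℕ) : Matrix (Fin m) (Fin m) ℝ :=
  Matrix.of fun k j =>
    if (k : ℕ) = (j : ℕ) then
      (1 + 2 * r ((k : ℕ) + 1)) / (1 + r ((k : ℕ) + 1))
    else if (j : ℕ) + 1 = (k : ℕ) then
      -(r ((k : ℕ) + 1) * Real.sqrt (r ((k : ℕ) + 1))) / (1 + r ((k : ℕ) + 1))
    else 0

/-!
With rows indexed from `0`, row `k ≥ 1` of `B̃₂ x` is `d(s) x_k − e(s) x_{k−1}`,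
where `s = r_{k+1}`, `d(s) = (1+2s)/(1+s)` and `e(s) = s^{3/2}/(1+s)`; row `0` is
`d(r₁) x₀ = x₀`. Hence
`xᵀ B̃ x = 2 xᵀ B̃₂ x = 2 x₀² + Σ_{k ≥ 1} 2 (d(s) x_k² − e(s) x_k x_{k−1})`.
Completing the square,
`2 (d(s) u² − e(s) u v) − (2 u² − (s/2) v²) = s/(1+s) · (2 (u − √s v/2)² + v²/2) ≥ 0`,
so `xᵀ B̃ x ≥ Σ_k c_k x_k²` with `c_k = 2 − r_{k+2}/2` and `c_{n−1} = 2`. All `c_k` are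
positive because the step ratios stay below `(3 + √17)/2 < 4`.
-/

lemma dotProduct_add_transpose_mulVec {ι α : Type*} [Fintype ι] [CommSemiring α]
    (A : Matrix ι ι α) (x : ι → α) :
    x ⬝ᵥ ((A + Aᵀ) *ᵥ x) = 2 * (x ⬝ᵥ (A *ᵥ x)) := by
  rw [add_mulVec, dotProduct_add, dotProduct_transpose_mulVec, two_mul]

lemma sum_mul_sq_pos {ι : Type*} [Fintype ι] {w x : ι → ℝ} (hw : ∀ i, 0 < w i)
    (hx : x ≠ 0) : 0 < ∑ i, w i * x i ^ 2 := by
  obtain ⟨i, hi⟩ := Function.ne_iff.mp hx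
  exact sum_pos' (fun j _ => by have := hw j; positivity)
    ⟨i, mem_univ i, mul_pos (hw i) (sq_pos_of_ne_zero hi)⟩

section Bt2

variable (r : ℕ → ℝ) {m : ℕ} (x : Fin (m + 1) → ℝ)

lemma Bt2_mulVec_zero : (Bt2 r (m + 1) *ᵥ x) 0 = (1 + 2 * r 1) / (1 + r 1) * x 0 := by
  rw [mulVec, dotProduct, Fintype.sum_eq_single 0]
  · simp [Bt2]
  · intro j hj
    have : (0 : ℕ) ≠ j := fun h => hj (Fin.ext h.symm)
    simp [Bt2, this]

lemma Bt2_mulVec_succ (j : Fin m) :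
    (Bt2 r (m + 1) *ᵥ x) j.succ = (1 + 2 * r (j + 2)) / (1 + r (j + 2)) * x j.succ
      - r (j + 2) * √(r (j + 2)) / (1 + r (j + 2)) * x j.castSucc := by
  rw [mulVec, dotProduct, Fintype.sum_eq_add j.succ j.castSucc (Fin.castSucc_lt_succ (i := j)).ne']
  · simp [Bt2, sub_eq_add_neg, neg_div]
  · rintro i ⟨hi₁, hi₂⟩
    have h₁ : (j : ℕ) + 1 ≠ i := fun h => hi₁ (Fin.ext h.symm)
    have h₂ : (i : ℕ) ≠ j := fun h => hi₂ (Fin.ext h)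
    simp [Bt2, h₁, h₂]

lemma dotProduct_Bt2_mulVec :
    x ⬝ᵥ (Bt2 r (m + 1) *ᵥ x) = (1 + 2 * r 1) / (1 + r 1) * x 0 ^ 2 +
      ∑ j : Fin m, ((1 + 2 * r (j + 2)) / (1 + r (j + 2)) * x j.succ ^ 2
        - r (j + 2) * √(r (j + 2)) / (1 + r (j + 2)) * x j.succ * x j.castSucc) := by
  rw [dotProduct, Fin.sum_univ_succ, Bt2_mulVec_zero]
  congr 1
  · ring
  · exact sum_congr rfl fun j _ => by rw [Bt2_mulVec_succ]; ring

end Bt2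

lemma two_mul_sq_sub_half_mul_sq_le {s : ℝ} (hs : 0 ≤ s) (u v : ℝ) :
    2 * u ^ 2 - s / 2 * v ^ 2 ≤
      2 * ((1 + 2 * s) / (1 + s) * u ^ 2 - s * √s / (1 + s) * u * v) := by
  have key : 2 * ((1 + 2 * s) / (1 + s) * u ^ 2 - s * √s / (1 + s) * u * v)
      - (2 * u ^ 2 - s / 2 * v ^ 2)
      = s / (1 + s) * (2 * (u - √s / 2 * v) ^ 2 + v ^ 2 / 2) := by
    field_simp
    linear_combination (-(s * v ^ 2)) * Real.sq_sqrt hs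
  have : 0 ≤ s / (1 + s) * (2 * (u - √s / 2 * v) ^ 2 + v ^ 2 / 2) := by positivity
  linarith

lemma three_add_sqrt_seventeen_div_two_lt_four : (3 + √17) / 2 < 4 := by
  have : √17 < 5 := by
    rw [Real.sqrt_lt' (by norm_num)]
    norm_num
  linarith

lemma two_mul_sum_sq_sub_le_dotProduct_Bt2_add_transpose_mulVec (r : ℕ → ℝ) {m : ℕ}
    (hr1 : r 1 = 0) (hr : ∀ j : Fin m, 0 ≤ r (j + 2)) (x : Fin (m + 1) → ℝ) :
    2 * ∑ i, x i ^ 2 - ∑ j : Fin m, r (j + 2) / 2 * x j.castSucc ^ 2 ≤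
      x ⬝ᵥ ((Bt2 r (m + 1) + (Bt2 r (m + 1))ᵀ) *ᵥ x) := by
  have hrows := sum_le_sum (s := univ) fun (j : Fin m) _ =>
    two_mul_sq_sub_half_mul_sq_le (hr j) (x j.succ) (x j.castSucc)
  rw [sum_sub_distrib, ← mul_sum, ← mul_sum] at hrows
  rw [dotProduct_add_transpose_mulVec, dotProduct_Bt2_mulVec, hr1, Fin.sum_univ_succ,
    show (1 + 2 * (0 : ℝ)) / (1 + 0) = 1 by norm_num]
  linarith

theorem stmt7_general (n : ℕ) (r : ℕ → ℝ)
    (hr1 : r 1 = 0)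
    (hratio : ∀ k, 2 ≤ k → k ≤ n → 0 < r k ∧ r k < (3 + Real.sqrt 17) / 2) :
    (Bt2 r n + (Bt2 r n)ᵀ).PosDef := by
  refine .of_dotProduct_mulVec_pos ?_ fun x hx => ?_
  · simpa using isHermitian_add_transpose_self (Bt2 r n)
  rw [star_trivial]
  cases n with
  | zero => exact absurd (Subsingleton.elim x 0) hx
  | succ m =>
    have hr_bounds (j : Fin m) : 0 < r (j + 2) ∧ r (j + 2) < 4 := by
      obtain ⟨h0, h1⟩ := hratio (j + 2) (by omega) (by omega)
      exact ⟨h0, h1.trans three_add_sqrt_seventeen_div_two_lt_four⟩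
    set w : Fin (m + 1) → ℝ := Fin.snoc (fun j : Fin m => 2 - r (j + 2) / 2) 2
    have hw : ∀ i, 0 < w i := Fin.lastCases (by simp [w]) fun j => by
      simp only [w, Fin.snoc_castSucc]
      linarith [hr_bounds j]
    calc 0 < ∑ i, w i * x i ^ 2 := sum_mul_sq_pos hw hx
      _ = 2 * ∑ i, x i ^ 2 - ∑ j : Fin m, r (j + 2) / 2 * x j.castSucc ^ 2 := by
        simp only [w, Fin.sum_univ_castSucc, Fin.snoc_castSucc, Fin.snoc_last, mul_add, mul_sum,
          sub_mul, sum_sub_distrib]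
        ring
      _ ≤ _ := two_mul_sum_sq_sub_le_dotProduct_Bt2_add_transpose_mulVec r hr1
        (fun j => (hr_bounds j).1.le) x

theorem stmt7 (n : ℕ) (hn : 1 ≤ n) (τ r : ℕ → ℝ)
    (hτ : ∀ k, 1 ≤ k → k ≤ n → 0 < τ k)
    (hr1 : r 1 = 0)
    (hr : ∀ k, 2 ≤ k → k ≤ n → r k = τ k / τ (k - 1))
    (hratio : ∀ k, 2 ≤ k → k ≤ n → 0 < r k ∧ r k < (3 + Real.sqrt 17) / 2) :
    (Bt2 r n + (Bt2 r n)ᵀ).PosDef :=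
  stmt7_general n r hr1 hratio
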